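/- Let C be a connected component of viable edges of the assignment game all of whose vertices are essential. Then C is not a unique imputation component: there exist two core imputations which differ on the vertices of C. -/

import Mathlib

open scoped Classical

/-- `M` is a matching in the bipartite graph with edge set `E`. -/
def IsMatching {U V : Type*} (E M : Finset (U × V)) : Prop :=
  M ⊆ E ∧ (∀ e ∈ M, ∀ e' ∈ M, e.1 = e'.1 → e = e') ∧
    (∀ e ∈ M, ∀ e' ∈ M, e.2 = e'.2 → e = e')

/-- Total weight of a set of edges. -/
def matchWeight {U V : Type*} (w : U × V → ℚ) (M : Finset (U × V)) : ℚ :=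
  ∑ e ∈ M, w e

/-- Maximum weight of a matching in `(E, w)`. -/
noncomputable def maxWeight {U V : Type*} [DecidableEq U] [DecidableEq V]
    (E : Finset (U × V)) (w : U × V → ℚ) : ℚ :=
  ((E.powerset).filter (fun M => IsMatching E M)).sup'
    ⟨∅, by simp [IsMatching]⟩ (matchWeight w)

/-- `M` is a maximum weight matching. -/
def IsMaxMatching {U V : Type*} [DecidableEq U] [DecidableEq V]
    (E : Finset (U × V)) (w : U × V → ℚ) (M : Finset (U × V)) : Prop :=
  IsMatching E M ∧ matchWeight w M = maxWeight E w

/-- Core imputations of the assignment game (Shapley–Shubik characterization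
as optimal dual solutions). -/
def InCore {U V : Type*} [Fintype U] [Fintype V] [DecidableEq U] [DecidableEq V]
    (E : Finset (U × V)) (w : U × V → ℚ) (u : U → ℚ) (v : V → ℚ) : Prop :=
  (∀ i, 0 ≤ u i) ∧ (∀ j, 0 ≤ v j) ∧ (∀ e ∈ E, w e ≤ u e.1 + v e.2) ∧
    (∑ i, u i) + (∑ j, v j) = maxWeight E w

/-- A vertex (from either side) is matched in `M`. -/
def MatchedIn {U V : Type*} (M : Finset (U × V)) : U ⊕ V → Prop
  | Sum.inl i => ∃ j, (i, j) ∈ M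
  | Sum.inr j => ∃ i, (i, j) ∈ M

/-- A vertex is essential if it is matched in every maximum weight matching. -/
def EssentialVertex {U V : Type*} [DecidableEq U] [DecidableEq V]
    (E : Finset (U × V)) (w : U × V → ℚ) (q : U ⊕ V) : Prop :=
  ∀ M, IsMaxMatching E w M → MatchedIn M q

/-- An edge is viable if it is in some but not every maximum weight matching. -/
def ViableEdge {U V : Type*} [DecidableEq U] [DecidableEq V]
    (E : Finset (U × V)) (w : U × V → ℚ) (e : U × V) : Prop :=
  (∃ M, IsMaxMatching E w M ∧ e ∈ M) ∧ (∃ M, IsMaxMatching E w M ∧ e ∉ M)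

/-- A vertex is viable if it is matched in some but not every maximum weight
matching. -/
def ViableVertex {U V : Type*} [DecidableEq U] [DecidableEq V]
    (E : Finset (U × V)) (w : U × V → ℚ) (q : U ⊕ V) : Prop :=
  (∃ M, IsMaxMatching E w M ∧ MatchedIn M q) ∧
    (∃ M, IsMaxMatching E w M ∧ ¬ MatchedIn M q)

/-- Adjacency via essential-or-viable edges (the edges tight in every core
imputation, i.e. those belonging to some maximum weight matching). -/
def TightAdj {U V : Type*} [DecidableEq U] [DecidableEq V]
    (E : Finset (U × V)) (w : U × V → ℚ) (q q' : U ⊕ V) : Prop :=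
  ∃ e ∈ E, (∃ M, IsMaxMatching E w M ∧ e ∈ M) ∧
    ((q = Sum.inl e.1 ∧ q' = Sum.inr e.2) ∨ (q = Sum.inr e.2 ∧ q' = Sum.inl e.1))

/-- Adjacency via viable edges. -/
def ViableAdj {U V : Type*} [DecidableEq U] [DecidableEq V]
    (E : Finset (U × V)) (w : U × V → ℚ) (q q' : U ⊕ V) : Prop :=
  ∃ e ∈ E, ViableEdge E w e ∧
    ((q = Sum.inl e.1 ∧ q' = Sum.inr e.2) ∨ (q = Sum.inr e.2 ∧ q' = Sum.inl e.1))

set_option linter.unusedSectionVars false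
section Basic
variable {U V : Type*} [Fintype U] [Fintype V] [DecidableEq U] [DecidableEq V]
  (E : Finset (U × V)) (w : U × V → ℚ)

lemma matching_mem_filter {M : Finset (U × V)} (h : IsMatching E M) :
    M ∈ (E.powerset).filter (fun M => IsMatching E M) := by
  simp [Finset.mem_filter, Finset.mem_powerset, h, h.1]

lemma matchWeight_le_maxWeight {M : Finset (U × V)} (h : IsMatching E M) :
    matchWeight w M ≤ maxWeight E w :=
  Finset.le_sup' _ (matching_mem_filter E h)

lemma maxWeight_le {c : ℚ} (h : ∀ M, IsMatching E M → matchWeight w M ≤ c) :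
    maxWeight E w ≤ c := by
  apply Finset.sup'_le
  intro M hM
  exact h M (Finset.mem_filter.mp hM).2

lemma exists_maxMatching : ∃ M, IsMaxMatching E w M := by
  obtain ⟨M, hM, hw⟩ := Finset.exists_mem_eq_sup'
    (⟨∅, by simp [IsMatching]⟩ : ((E.powerset).filter (fun M => IsMatching E M)).Nonempty)
    (matchWeight w)
  exact ⟨M, (Finset.mem_filter.mp hM).2, hw.symm⟩

lemma empty_isMatching : IsMatching E (∅ : Finset (U × V)) := by
  simp [IsMatching]

lemma single_isMatching {e : U × V} (he : e ∈ E) : IsMatching E {e} := by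
  refine ⟨by simpa using he, ?_, ?_⟩ <;> intro a ha b hb _ <;>
    simp only [Finset.mem_singleton] at ha hb <;> subst ha <;> subst hb <;> rfl

lemma maxWeight_nonneg : 0 ≤ maxWeight E w := by
  have := matchWeight_le_maxWeight E w (empty_isMatching E)
  simpa [matchWeight] using this

end Basic
set_option linter.unusedSectionVars false

section Weak
variable {U V : Type*} [Fintype U] [Fintype V] [DecidableEq U] [DecidableEq V]
  {E : Finset (U × V)} {w : U × V → ℚ}

lemma sum_dual_over_matching {M : Finset (U × V)} (hM : IsMatching E M)
    {u : U → ℚ} {v : V → ℚ} (hu : ∀ i, 0 ≤ u i) (hv : ∀ j, 0 ≤ v j) :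
    ∑ e ∈ M, (u e.1 + v e.2) ≤ (∑ i, u i) + (∑ j, v j) := by
  rw [Finset.sum_add_distrib]
  have h1 : ∑ e ∈ M, u e.1 = ∑ i ∈ M.image Prod.fst, u i :=
    (Finset.sum_image (fun x hx y hy h => hM.2.1 x hx y hy h)).symm
  have h2 : ∑ e ∈ M, v e.2 = ∑ j ∈ M.image Prod.snd, v j :=
    (Finset.sum_image (fun x hx y hy h => hM.2.2 x hx y hy h)).symm
  rw [h1, h2]
  exact add_le_add
    (Finset.sum_le_sum_of_subset_of_nonneg (Finset.subset_univ _) (fun i _ _ => hu i))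
    (Finset.sum_le_sum_of_subset_of_nonneg (Finset.subset_univ _) (fun j _ _ => hv j))

lemma weak_duality {u : U → ℚ} {v : V → ℚ} (hu : ∀ i, 0 ≤ u i) (hv : ∀ j, 0 ≤ v j)
    (hf : ∀ e ∈ E, w e ≤ u e.1 + v e.2) :
    maxWeight E w ≤ (∑ i, u i) + (∑ j, v j) := by
  apply maxWeight_le
  intro M hM
  calc matchWeight w M ≤ ∑ e ∈ M, (u e.1 + v e.2) :=
        Finset.sum_le_sum (fun e he => hf e (hM.1 he))
    _ ≤ _ := sum_dual_over_matching hM hu hv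

end Weak
section Egervary
variable {U V : Type*} [Fintype U] [Fintype V] [DecidableEq U] [DecidableEq V]

lemma int_cover_min (E : Finset (U × V)) (W : U × V → ℕ) :
    ∃ (u : U → ℤ) (v : V → ℤ), ((∀ i, 0 ≤ u i) ∧ (∀ j, 0 ≤ v j) ∧
      ∀ e ∈ E, (W e : ℤ) ≤ u e.1 + v e.2) ∧
      ∀ (u' : U → ℤ) (v' : V → ℤ), ((∀ i, 0 ≤ u' i) ∧ (∀ j, 0 ≤ v' j) ∧
        ∀ e ∈ E, (W e : ℤ) ≤ u' e.1 + v' e.2) →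
        (∑ i, u i) + (∑ j, v j) ≤ (∑ i, u' i) + (∑ j, v' j) := by
  classical
  set P : ℤ → Prop := fun s => ∃ (u : U → ℤ) (v : V → ℤ),
    ((∀ i, 0 ≤ u i) ∧ (∀ j, 0 ≤ v j) ∧ ∀ e ∈ E, (W e : ℤ) ≤ u e.1 + v e.2) ∧
    (∑ i, u i) + (∑ j, v j) = s with hP
  have hfeas : ∀ e ∈ E, (W e : ℤ) ≤ (fun _ : U => ((E.sup W : ℕ) : ℤ)) e.1 + (fun _ : V => (0:ℤ)) e.2 := by
    intro e he
    have : (W e : ℤ) ≤ ((E.sup W : ℕ) : ℤ) := Int.ofNat_le.mpr (Finset.le_sup he)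
    simpa using this
  have Hinh : ∃ s, P s :=
    ⟨_, (fun _ => ((E.sup W : ℕ) : ℤ)), (fun _ => 0),
      ⟨fun i => Int.ofNat_nonneg _, fun j => le_refl _, hfeas⟩, rfl⟩
  have Hbdd : ∃ b : ℤ, ∀ s, P s → b ≤ s := by
    refine ⟨0, fun s hs => ?_⟩
    obtain ⟨u, v, ⟨hu, hv, _⟩, hsum⟩ := hs
    rw [← hsum]
    have h1 : (0:ℤ) ≤ ∑ i, u i := Finset.sum_nonneg fun i _ => hu i
    have h2 : (0:ℤ) ≤ ∑ j, v j := Finset.sum_nonneg fun j _ => hv j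
    linarith
  obtain ⟨s₀, ⟨u, v, hc, hsum⟩, hmin⟩ := Int.exists_least_of_bdd Hbdd Hinh
  exact ⟨u, v, hc, fun u' v' hc' => hsum ▸ hmin _ ⟨u', v', hc', rfl⟩⟩

end Egervary
lemma exists_tight_inj {U V : Type*} [Fintype U] [Fintype V] [DecidableEq U]
    [DecidableEq V] [Nonempty V] (E : Finset (U × V)) (W : U × V → ℕ)
    (u : U → ℤ) (v : V → ℤ)
    (hu : ∀ i, 0 ≤ u i) (hv : ∀ j, 0 ≤ v j)
    (hf : ∀ e ∈ E, (W e : ℤ) ≤ u e.1 + v e.2)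
    (hmin : ∀ (u' : U → ℤ) (v' : V → ℤ), ((∀ i, 0 ≤ u' i) ∧ (∀ j, 0 ≤ v' j) ∧
        ∀ e ∈ E, (W e : ℤ) ≤ u' e.1 + v' e.2) →
        (∑ i, u i) + (∑ j, v j) ≤ (∑ i, u' i) + (∑ j, v' j)) :
    ∃ F : U → V, (∀ i i', 0 < u i → 0 < u i' → F i = F i' → i = i') ∧
      (∀ i, 0 < u i → (i, F i) ∈ E ∧ (W (i, F i) : ℤ) = u i + v (F i)) := by
  classical
  set A : Finset U := Finset.univ.filter (fun i => 0 < u i) with hA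
  set t : U → Finset V := fun i =>
    Finset.univ.filter (fun j => (i,j) ∈ E ∧ (W (i,j) : ℤ) = u i + v j) with ht
  have hall : ∀ s : Finset {x // x ∈ A}, s.card ≤ (s.biUnion (fun x => t x.1)).card := by
    by_contra hcon
    push_neg at hcon
    obtain ⟨s, hs⟩ := hcon
    set S : Finset U := s.image Subtype.val with hS
    set T : Finset V := s.biUnion (fun x => t x.1) with hT
    have hScard : S.card = s.card := Finset.card_image_of_injective _ Subtype.val_injective
    have hSA : ∀ i ∈ S, 0 < u i := by
      intro i hi
      obtain ⟨x, hx, rfl⟩ := Finset.mem_image.mp hi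
      exact (Finset.mem_filter.mp x.2).2
    have hST : ∀ i ∈ S, ∀ j, ((i,j) ∈ E ∧ (W (i,j) : ℤ) = u i + v j) → j ∈ T := by
      intro i hi j hj
      obtain ⟨x, hx, rfl⟩ := Finset.mem_image.mp hi
      exact Finset.mem_biUnion.mpr ⟨x, hx, Finset.mem_filter.mpr ⟨Finset.mem_univ _, hj⟩⟩
    set u' : U → ℤ := fun i => u i - if i ∈ S then 1 else 0 with hu'
    set v' : V → ℤ := fun j => v j + if j ∈ T then 1 else 0 with hv'
    have cover' : (∀ i, 0 ≤ u' i) ∧ (∀ j, 0 ≤ v' j) ∧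
        ∀ e ∈ E, (W e : ℤ) ≤ u' e.1 + v' e.2 := by
      refine ⟨fun i => ?_, fun j => ?_, fun e he => ?_⟩
      · simp only [hu']
        by_cases hi : i ∈ S
        · have := hSA i hi; simp [hi]; omega
        · simp [hi, hu i]
      · simp only [hv']
        have := hv j
        by_cases hj : j ∈ T <;> simp [hj] <;> omega
      · simp only [hu', hv']
        by_cases h1 : e.1 ∈ S
        · by_cases h2 : e.2 ∈ T
          · simp only [if_pos h1, if_pos h2]
            have := hf e he; omega
          · have hnt : ¬ ((W e : ℤ) = u e.1 + v e.2) := by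
              intro htight
              exact h2 (hST e.1 h1 e.2 (by rw [Prod.mk.eta] at *; exact ⟨he, htight⟩))
            have := hf e he
            simp only [if_pos h1]
            have hW : (W e : ℤ) ≤ u e.1 + v e.2 - 1 := by omega
            by_cases h2' : e.2 ∈ T <;> simp [h2'] <;> omega
        · simp only [if_neg h1]
          have := hf e he
          by_cases h2 : e.2 ∈ T <;> simp [h2] <;> omega
    have hsum1 : ∑ i, u' i = (∑ i, u i) - S.card := by
      simp only [hu', Finset.sum_sub_distrib]
      congr 1
      simp
    have hsum2 : ∑ j, v' j = (∑ j, v j) + T.card := by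
      simp only [hv', Finset.sum_add_distrib]
      congr 1
      simp
    have hle := hmin u' v' cover'
    rw [hsum1, hsum2] at hle
    have hTS : (T.card : ℤ) < S.card := by
      rw [hScard]; exact_mod_cast hs
    linarith
  obtain ⟨f, finj, hft⟩ :=
    (Finset.all_card_le_biUnion_card_iff_exists_injective (fun x : {x // x ∈ A} => t x.1)).mp hall
  have memA : ∀ {i}, 0 < u i → i ∈ A := fun h => Finset.mem_filter.mpr ⟨Finset.mem_univ _, h⟩
  refine ⟨fun i => if h : i ∈ A then f ⟨i, h⟩ else Classical.arbitrary V, ?_, ?_⟩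
  · intro i i' hi hi' hFF
    simp only [dif_pos (memA hi), dif_pos (memA hi')] at hFF
    exact congrArg Subtype.val (finj hFF)
  · intro i hi
    simp only [dif_pos (memA hi)]
    have := hft ⟨i, memA hi⟩
    simp only [ht, Finset.mem_filter] at this
    exact this.2
lemma exists_core_of_natValued {U V : Type*} [Fintype U] [Fintype V] [DecidableEq U]
    [DecidableEq V] (E : Finset (U × V)) (w : U × V → ℚ)
    (hnat : ∀ e ∈ E, ∃ n : ℕ, w e = (n : ℚ)) : ∃ u v, InCore E w u v := by
  classical
  by_cases hE : E = ∅
  · subst hE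
    refine ⟨0, 0, fun i => le_refl _, fun j => le_refl _, by simp, ?_⟩
    have h1 : maxWeight (∅ : Finset (U × V)) w ≤ 0 := by
      apply maxWeight_le
      intro M hM
      have : M = ∅ := Finset.subset_empty.mp hM.1
      simp [this, matchWeight]
    have h2 := maxWeight_nonneg (∅ : Finset (U × V)) w
    simp only [Pi.zero_apply, Finset.sum_const_zero, add_zero]
    linarith
  obtain ⟨e₀, he₀⟩ := Finset.nonempty_iff_ne_empty.mpr hE
  haveI : Nonempty V := ⟨e₀.2⟩
  haveI : Nonempty U := ⟨e₀.1⟩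
  set W : U × V → ℕ := fun e => if h : e ∈ E then (hnat e h).choose else 0 with hW
  have hWw : ∀ e ∈ E, w e = (W e : ℚ) := by
    intro e he
    simp only [hW, dif_pos he]
    exact (hnat e he).choose_spec
  obtain ⟨u, v, ⟨hu, hv, hf⟩, hmin⟩ := int_cover_min E W
  obtain ⟨F, Finj, Ftight⟩ := exists_tight_inj E W u v hu hv hf hmin
  obtain ⟨G, Ginj, Gtight'⟩ := exists_tight_inj (E.image Prod.swap) (fun p => W p.swap)
    v u hv hu
    (by
      intro p hp
      obtain ⟨a, ha, rfl⟩ := Finset.mem_image.mp hp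
      have := hf a ha
      simp only [Prod.swap_swap, Prod.fst_swap, Prod.snd_swap]
      linarith)
    (by
      intro v' u' ⟨hv', hu', hf'⟩
      have : (∑ i, u i) + (∑ j, v j) ≤ (∑ i, u' i) + (∑ j, v' j) := by
        apply hmin
        refine ⟨hu', hv', fun e he => ?_⟩
        have := hf' e.swap (Finset.mem_image.mpr ⟨e, he, rfl⟩)
        simp only [Prod.swap_swap, Prod.fst_swap, Prod.snd_swap] at this
        linarith
      linarith)
  have Gtight : ∀ j, 0 < v j → (G j, j) ∈ E ∧ (W (G j, j) : ℤ) = u (G j) + v j := by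
    intro j hj
    obtain ⟨hmem, htight⟩ := Gtight' j hj
    obtain ⟨a, ha, hswap⟩ := Finset.mem_image.mp hmem
    have ha2 : a = (G j, j) := by
      have := congrArg Prod.swap hswap
      simpa using this
    subst ha2
    constructor
    · exact ha
    · have hid : ((j, G j) : V × U).swap = (G j, j) := rfl
      simp only [hid] at htight
      linarith
  -- Mendelsohn–Dulmage
  set Apos : U → Prop := fun i => 0 < u i with hApos
  set Bpos : V → Prop := fun j => 0 < v j with hBpos
  set step : U → U → Prop := fun x y => Apos x ∧ Bpos (F x) ∧ y = G (F x) ∧ Apos y with hstep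
  set Sset : U → Prop := fun i => ∃ i₀, Apos i₀ ∧ (∀ j, Bpos j → G j ≠ i₀) ∧
    Relation.ReflTransGen step i₀ i with hSset
  set SA : Finset U := Finset.univ.filter (fun i => Apos i ∧ Sset i) with hSA
  set BX : Finset V := Finset.univ.filter
    (fun j => Bpos j ∧ ∀ i, (Apos i ∧ Sset i) → F i ≠ j) with hBX
  set M : Finset (U × V) :=
    SA.image (fun i => (i, F i)) ∪ BX.image (fun j => (G j, j)) with hM
  have memSA : ∀ {i}, i ∈ SA ↔ (Apos i ∧ Sset i) := by
    intro i; simp [hSA]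
  have memBX : ∀ {j}, j ∈ BX ↔ (Bpos j ∧ ∀ i, (Apos i ∧ Sset i) → F i ≠ j) := by
    intro j; simp [hBX]
  have K1 : ∀ i, Apos i → ¬ Sset i → ∃ j, Bpos j ∧ G j = i := by
    intro i hA hnS
    by_contra hcon
    push_neg at hcon
    exact hnS ⟨i, hA, fun j hj => hcon j hj, Relation.ReflTransGen.refl⟩
  have K2 : ∀ x, Sset x → Apos x → Bpos (F x) → Apos (G (F x)) → Sset (G (F x)) := by
    rintro x ⟨i₀, h1, h2, chain⟩ hAx hBFx hAG
    exact ⟨i₀, h1, h2, chain.tail ⟨hAx, hBFx, rfl, hAG⟩⟩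
  have K3 : ∀ i, Sset i → ∀ j, Bpos j → G j = i →
      ∃ x, (Apos x ∧ Sset x) ∧ Bpos (F x) ∧ F x = j := by
    rintro i ⟨i₀, h1, h2, chain⟩ j hBj hGj
    rcases Relation.ReflTransGen.cases_tail chain with heq | ⟨c, chainc, stepc⟩
    · exact absurd (hGj.trans heq) (h2 j hBj)
    · obtain ⟨hAc, hBFc, hiG, hAi⟩ := stepc
      have hj : j = F c := Ginj j (F c) hBj hBFc (by rw [hGj, hiG])
      exact ⟨c, ⟨hAc, ⟨i₀, h1, h2, chainc⟩⟩, hBFc, hj.symm⟩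
  have Mtight : ∀ e ∈ M, e ∈ E ∧ (W e : ℤ) = u e.1 + v e.2 := by
    intro e he
    rcases Finset.mem_union.mp he with h | h
    · obtain ⟨i, hi, rfl⟩ := Finset.mem_image.mp h
      have hA := (memSA.mp hi).1
      obtain ⟨hmem, ht⟩ := Ftight i hA
      exact ⟨hmem, by simpa using ht⟩
    · obtain ⟨j, hj, rfl⟩ := Finset.mem_image.mp h
      have hB := (memBX.mp hj).1
      exact Gtight j hB
  have Mmatch : IsMatching E M := by
    refine ⟨fun e he => (Mtight e he).1, ?_, ?_⟩
    · -- fst uniqueness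
      intro e he e' he' hfst
      rcases Finset.mem_union.mp he with h | h <;>
        rcases Finset.mem_union.mp he' with h' | h'
      · obtain ⟨i, hi, rfl⟩ := Finset.mem_image.mp h
        obtain ⟨i', hi', rfl⟩ := Finset.mem_image.mp h'
        simp only at hfst
        subst hfst; rfl
      · obtain ⟨i, hi, rfl⟩ := Finset.mem_image.mp h
        obtain ⟨j, hj, rfl⟩ := Finset.mem_image.mp h'
        simp only at hfst
        obtain ⟨hBj, hnF⟩ := memBX.mp hj
        obtain ⟨hAi, hSi⟩ := memSA.mp hi
        obtain ⟨x, hx, hBFx, hFxj⟩ := K3 i hSi j hBj hfst.symm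
        exact absurd hFxj (hnF x hx)
      · obtain ⟨j, hj, rfl⟩ := Finset.mem_image.mp h
        obtain ⟨i, hi, rfl⟩ := Finset.mem_image.mp h'
        simp only at hfst
        obtain ⟨hBj, hnF⟩ := memBX.mp hj
        obtain ⟨hAi, hSi⟩ := memSA.mp hi
        obtain ⟨x, hx, hBFx, hFxj⟩ := K3 i hSi j hBj hfst
        exact absurd hFxj (hnF x hx)
      · obtain ⟨j, hj, rfl⟩ := Finset.mem_image.mp h
        obtain ⟨j', hj', rfl⟩ := Finset.mem_image.mp h'
        simp only at hfst
        have := Ginj j j' (memBX.mp hj).1 (memBX.mp hj').1 hfst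
        subst this; rfl
    · -- snd uniqueness
      intro e he e' he' hsnd
      rcases Finset.mem_union.mp he with h | h <;>
        rcases Finset.mem_union.mp he' with h' | h'
      · obtain ⟨i, hi, rfl⟩ := Finset.mem_image.mp h
        obtain ⟨i', hi', rfl⟩ := Finset.mem_image.mp h'
        simp only at hsnd
        have := Finj i i' (memSA.mp hi).1 (memSA.mp hi').1 hsnd
        subst this; rfl
      · obtain ⟨i, hi, rfl⟩ := Finset.mem_image.mp h
        obtain ⟨j, hj, rfl⟩ := Finset.mem_image.mp h'
        simp only at hsnd
        exact absurd hsnd ((memBX.mp hj).2 i (memSA.mp hi))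
      · obtain ⟨j, hj, rfl⟩ := Finset.mem_image.mp h
        obtain ⟨i, hi, rfl⟩ := Finset.mem_image.mp h'
        simp only at hsnd
        exact absurd hsnd.symm ((memBX.mp hj).2 i (memSA.mp hi))
      · obtain ⟨j, hj, rfl⟩ := Finset.mem_image.mp h
        obtain ⟨j', hj', rfl⟩ := Finset.mem_image.mp h'
        simp only at hsnd
        subst hsnd; rfl
  have coverA : ∀ i, Apos i → ∃ j, (i, j) ∈ M := by
    intro i hA
    by_cases hS : Sset i
    · exact ⟨F i, Finset.mem_union_left _
        (Finset.mem_image.mpr ⟨i, memSA.mpr ⟨hA, hS⟩, rfl⟩)⟩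
    · obtain ⟨j, hBj, hGj⟩ := K1 i hA hS
      have hjBX : j ∈ BX := by
        refine memBX.mpr ⟨hBj, fun x hx hFx => ?_⟩
        have := K2 x hx.2 hx.1 (hFx ▸ hBj) (by rw [hFx, hGj]; exact hA)
        rw [hFx, hGj] at this
        exact hS this
      exact ⟨j, Finset.mem_union_right _
        (Finset.mem_image.mpr ⟨j, hjBX, by rw [hGj]⟩)⟩
  have coverB : ∀ j, Bpos j → ∃ i, (i, j) ∈ M := by
    intro j hB
    by_cases hex : ∃ x, (Apos x ∧ Sset x) ∧ F x = j
    · obtain ⟨x, hx, hFx⟩ := hex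
      exact ⟨x, Finset.mem_union_left _
        (Finset.mem_image.mpr ⟨x, memSA.mpr hx, by rw [hFx]⟩)⟩
    · push_neg at hex
      exact ⟨G j, Finset.mem_union_right _
        (Finset.mem_image.mpr ⟨j, memBX.mpr ⟨hB, hex⟩, rfl⟩)⟩
  -- conclusion
  set uq : U → ℚ := fun i => ((u i : ℤ) : ℚ) with huq
  set vq : V → ℚ := fun j => ((v j : ℤ) : ℚ) with hvq
  have hfeasq : ∀ e ∈ E, w e ≤ uq e.1 + vq e.2 := by
    intro e he
    rw [hWw e he]
    have := hf e he
    simp only [huq, hvq]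
    exact_mod_cast this
  have hkey : matchWeight w M = (∑ i, uq i) + (∑ j, vq j) := by
    have h1 : matchWeight w M = ∑ e ∈ M, (uq e.1 + vq e.2) := by
      apply Finset.sum_congr rfl
      intro e he
      obtain ⟨hmem, ht⟩ := Mtight e he
      rw [hWw e hmem]
      simp only [huq, hvq]
      exact_mod_cast congrArg (fun z : ℤ => (z : ℚ)) ht
    rw [h1, Finset.sum_add_distrib]
    have h2 : ∑ e ∈ M, uq e.1 = ∑ i ∈ M.image Prod.fst, uq i :=
      (Finset.sum_image (fun x hx y hy h => Mmatch.2.1 x hx y hy h)).symm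
    have h3 : ∑ e ∈ M, vq e.2 = ∑ j ∈ M.image Prod.snd, vq j :=
      (Finset.sum_image (fun x hx y hy h => Mmatch.2.2 x hx y hy h)).symm
    rw [h2, h3]
    congr 1
    · apply Finset.sum_subset (Finset.subset_univ _)
      intro i _ hni
      have : ¬ Apos i := by
        intro hA
        obtain ⟨j, hj⟩ := coverA i hA
        exact hni (Finset.mem_image.mpr ⟨(i, j), hj, rfl⟩)
      simp only [hApos, not_lt] at this
      simp only [huq]
      have := le_antisymm this (hu i)
      rw [this]; simp
    · apply Finset.sum_subset (Finset.subset_univ _)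
      intro j _ hnj
      have : ¬ Bpos j := by
        intro hB
        obtain ⟨i, hi⟩ := coverB j hB
        exact hnj (Finset.mem_image.mpr ⟨(i, j), hi, rfl⟩)
      simp only [hBpos, not_lt] at this
      simp only [hvq]
      have := le_antisymm this (hv j)
      rw [this]; simp
  refine ⟨uq, vq, fun i => by simp [huq]; exact_mod_cast hu i,
    fun j => by simp [hvq]; exact_mod_cast hv j, hfeasq, ?_⟩
  have hle1 : maxWeight E w ≤ (∑ i, uq i) + (∑ j, vq j) :=
    weak_duality (fun i => by simp only [huq]; exact_mod_cast hu i)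
      (fun j => by simp only [hvq]; exact_mod_cast hv j) hfeasq
  have hle2 : (∑ i, uq i) + (∑ j, vq j) ≤ maxWeight E w := by
    rw [← hkey]
    exact matchWeight_le_maxWeight E w Mmatch
  linarith
lemma maxWeight_smul {U V : Type*} [Fintype U] [Fintype V] [DecidableEq U]
    [DecidableEq V] (E : Finset (U × V)) (w : U × V → ℚ) {c : ℚ} (hc : 0 ≤ c) :
    maxWeight E (fun e => c * w e) = c * maxWeight E w := by
  unfold maxWeight
  refine Eq.trans ?_ (Finset.comp_sup'_eq_sup'_comp _ (fun x => c * x)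
    (fun x y => mul_max_of_nonneg x y hc)).symm
  apply Finset.sup'_congr _ rfl
  intro M _
  simp [Function.comp, matchWeight, Finset.mul_sum]

lemma exists_core_of_nonneg {U V : Type*} [Fintype U] [Fintype V] [DecidableEq U]
    [DecidableEq V] (E : Finset (U × V)) (w : U × V → ℚ) (hw : ∀ e ∈ E, 0 ≤ w e) :
    ∃ u v, InCore E w u v := by
  classical
  set N : ℕ := ∏ e ∈ E, (w e).den with hN
  have hNpos : 0 < N := Finset.prod_pos (fun e _ => (w e).pos)
  have hNQ : (0:ℚ) < N := by exact_mod_cast hNpos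
  have hnat : ∀ e ∈ E, ∃ n : ℕ, (N : ℚ) * w e = (n : ℚ) := by
    intro e he
    obtain ⟨k, hk⟩ := Finset.dvd_prod_of_mem (fun e => (w e).den) he
    refine ⟨(w e).num.toNat * k, ?_⟩
    have hnum : (0:ℤ) ≤ (w e).num := Rat.num_nonneg.mpr (hw e he)
    have hden : ((w e).den : ℚ) ≠ 0 := by exact_mod_cast (w e).den_ne_zero
    have hrep : ((w e).num : ℚ) / ((w e).den : ℚ) = w e := Rat.num_div_den _
    have hNk : (N : ℚ) = ((w e).den : ℚ) * (k : ℚ) := by rw [hN]; exact_mod_cast hk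
    have key : ((w e).den : ℚ) * w e = ((w e).num : ℚ) := by
      rw [mul_comm]; exact ((div_eq_iff hden).mp hrep).symm ▸ rfl
    rw [hNk]
    push_cast [Int.toNat_of_nonneg hnum]
    calc ((w e).den : ℚ) * k * w e = (((w e).den : ℚ) * w e) * k := by ring
      _ = ((w e).num : ℚ) * k := by rw [key]
      _ = ((w e).num.toNat : ℚ) * k := by
            norm_cast
            simp [Int.toNat_of_nonneg hnum]
  obtain ⟨u, v, hu, hv, hf, hsum⟩ := exists_core_of_natValued E (fun e => (N:ℚ) * w e) hnat
  refine ⟨fun i => u i / N, fun j => v j / N, fun i => div_nonneg (hu i) hNQ.le,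
    fun j => div_nonneg (hv j) hNQ.le, fun e he => ?_, ?_⟩
  · have h := hf e he
    simp only at h
    rw [← add_div, le_div_iff₀ hNQ]
    linarith
  · rw [← Finset.sum_div, ← Finset.sum_div, ← add_div, hsum,
      maxWeight_smul E w hNQ.le]
    field_simp
lemma core_tight {U V : Type*} [Fintype U] [Fintype V] [DecidableEq U] [DecidableEq V]
    {E : Finset (U × V)} {w : U × V → ℚ} {u : U → ℚ} {v : V → ℚ}
    (hc : InCore E w u v) {M : Finset (U × V)} (hM : IsMaxMatching E w M) :
    (∀ e ∈ M, u e.1 + v e.2 = w e) ∧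
    (∀ i, (∀ j, (i,j) ∉ M) → u i = 0) ∧ (∀ j, (∀ i, (i,j) ∉ M) → v j = 0) := by
  classical
  obtain ⟨hu, hv, hf, hsum⟩ := hc
  set L : Finset U := M.image Prod.fst with hL
  set R : Finset V := M.image Prod.snd with hR
  have h2 : ∑ e ∈ M, u e.1 = ∑ i ∈ L, u i :=
    (Finset.sum_image (fun x hx y hy h => hM.1.2.1 x hx y hy h)).symm
  have h3 : ∑ e ∈ M, v e.2 = ∑ j ∈ R, v j :=
    (Finset.sum_image (fun x hx y hy h => hM.1.2.2 x hx y hy h)).symm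
  have hLsplit : ∑ i ∈ L, u i + ∑ i ∈ Finset.univ \ L, u i = ∑ i, u i := by
    rw [add_comm]; exact Finset.sum_sdiff (Finset.subset_univ _)
  have hRsplit : ∑ j ∈ R, v j + ∑ j ∈ Finset.univ \ R, v j = ∑ j, v j := by
    rw [add_comm]; exact Finset.sum_sdiff (Finset.subset_univ _)
  have hLnn : 0 ≤ ∑ i ∈ Finset.univ \ L, u i := Finset.sum_nonneg fun i _ => hu i
  have hRnn : 0 ≤ ∑ j ∈ Finset.univ \ R, v j := Finset.sum_nonneg fun j _ => hv j
  have hslack : ∀ e ∈ M, 0 ≤ (u e.1 + v e.2) - w e :=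
    fun e he => sub_nonneg.mpr (hf e (hM.1.1 he))
  have hsum_slack : 0 ≤ ∑ e ∈ M, ((u e.1 + v e.2) - w e) :=
    Finset.sum_nonneg hslack
  have hchain : ∑ e ∈ M, ((u e.1 + v e.2) - w e)
      + (∑ i ∈ Finset.univ \ L, u i + ∑ j ∈ Finset.univ \ R, v j) = 0 := by
    have hMW : ∑ e ∈ M, w e = maxWeight E w := hM.2
    have expand : ∑ e ∈ M, ((u e.1 + v e.2) - w e) =
        (∑ i ∈ L, u i + ∑ j ∈ R, v j) - ∑ e ∈ M, w e := by
      rw [Finset.sum_sub_distrib, Finset.sum_add_distrib, h2, h3]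
    rw [expand, hMW]
    have := hsum
    linarith [hLsplit, hRsplit]
  have hz1 : ∑ e ∈ M, ((u e.1 + v e.2) - w e) = 0 := by linarith
  have hz2 : ∑ i ∈ Finset.univ \ L, u i = 0 := by linarith
  have hz3 : ∑ j ∈ Finset.univ \ R, v j = 0 := by linarith
  refine ⟨?_, ?_, ?_⟩
  · intro e he
    have := (Finset.sum_eq_zero_iff_of_nonneg hslack).mp hz1 e he
    linarith
  · intro i hi
    have hiL : i ∈ Finset.univ \ L := by
      simp only [Finset.mem_sdiff, Finset.mem_univ, true_and, hL, Finset.mem_image]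
      rintro ⟨e, heM, rfl⟩
      exact hi e.2 (by rwa [Prod.mk.eta])
    exact (Finset.sum_eq_zero_iff_of_nonneg (fun i _ => hu i)).mp hz2 i hiL
  · intro j hj
    have hjR : j ∈ Finset.univ \ R := by
      simp only [Finset.mem_sdiff, Finset.mem_univ, true_and, hR, Finset.mem_image]
      rintro ⟨e, heM, rfl⟩
      exact hj e.1 (by rwa [Prod.mk.eta])
    exact (Finset.sum_eq_zero_iff_of_nonneg (fun j _ => hv j)).mp hz3 j hjR
section Swap
variable {U V : Type*} [Fintype U] [Fintype V] [DecidableEq U] [DecidableEq V]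

lemma isMatching_swap {E M : Finset (U × V)} (h : IsMatching E M) :
    IsMatching (E.image Prod.swap) (M.image Prod.swap) := by
  refine ⟨Finset.image_subset_image h.1, ?_, ?_⟩
  · intro e he e' he' hfst
    obtain ⟨a, ha, rfl⟩ := Finset.mem_image.mp he
    obtain ⟨b, hb, rfl⟩ := Finset.mem_image.mp he'
    simp only [Prod.fst_swap] at hfst
    rw [h.2.2 a ha b hb hfst]
  · intro e he e' he' hsnd
    obtain ⟨a, ha, rfl⟩ := Finset.mem_image.mp he
    obtain ⟨b, hb, rfl⟩ := Finset.mem_image.mp he'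
    simp only [Prod.snd_swap] at hsnd
    rw [h.2.1 a ha b hb hsnd]

lemma matchWeight_swap (w : U × V → ℚ) (M : Finset (U × V)) :
    matchWeight (fun p : V × U => w p.swap) (M.image Prod.swap) = matchWeight w M := by
  unfold matchWeight
  rw [Finset.sum_image (fun x _ y _ h => Prod.swap_injective h)]
  simp

lemma image_swap_swap (E : Finset (U × V)) :
    (E.image Prod.swap).image Prod.swap = E := by
  rw [Finset.image_image]
  simp [Function.comp]

lemma maxWeight_swap (E : Finset (U × V)) (w : U × V → ℚ) :
    maxWeight (E.image Prod.swap) (fun p : V × U => w p.swap) = maxWeight E w := by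
  apply le_antisymm
  · apply maxWeight_le
    intro M' hM'
    have h1 : IsMatching E (M'.image Prod.swap) := by
      have := isMatching_swap hM'
      rwa [image_swap_swap] at this
    have h2 : matchWeight (fun p : U × V => ((fun p : V × U => w p.swap) p.swap))
        (M'.image Prod.swap) = matchWeight (fun p : V × U => w p.swap) M' :=
      matchWeight_swap (fun p : V × U => w p.swap) M'
    have h3 : matchWeight w (M'.image Prod.swap) = matchWeight (fun p : V × U => w p.swap) M' := by
      rw [← h2]; apply Finset.sum_congr rfl; intro e _; simp
    rw [← h3]
    exact matchWeight_le_maxWeight E w h1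
  · apply maxWeight_le
    intro M hM
    rw [← matchWeight_swap w M]
    exact matchWeight_le_maxWeight _ _ (isMatching_swap hM)

lemma isMaxMatching_swap {E M : Finset (U × V)} {w : U × V → ℚ}
    (h : IsMaxMatching E w M) :
    IsMaxMatching (E.image Prod.swap) (fun p : V × U => w p.swap) (M.image Prod.swap) :=
  ⟨isMatching_swap h.1, by rw [matchWeight_swap, maxWeight_swap]; exact h.2⟩

lemma inCore_of_swap {E : Finset (U × V)} {w : U × V → ℚ} {u : U → ℚ} {v : V → ℚ}
    (h : InCore (E.image Prod.swap) (fun p : V × U => w p.swap) v u) :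
    InCore E w u v := by
  obtain ⟨hv, hu, hf, hsum⟩ := h
  refine ⟨hu, hv, fun e he => ?_, ?_⟩
  · have := hf e.swap (Finset.mem_image.mpr ⟨e, he, rfl⟩)
    simp only [Prod.swap_swap, Prod.fst_swap, Prod.snd_swap] at this
    linarith
  · rw [← maxWeight_swap E w, ← hsum]; ring

lemma essential_swap {E : Finset (U × V)} {w : U × V → ℚ} {j₀ : V}
    (h : EssentialVertex E w (Sum.inr j₀)) :
    EssentialVertex (E.image Prod.swap) (fun p : V × U => w p.swap) (Sum.inl j₀) := by
  intro M' hM'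
  have hmax : IsMaxMatching E w (M'.image Prod.swap) := by
    have := isMaxMatching_swap hM'
    rw [image_swap_swap] at this
    have hw : (fun p : U × V => ((fun p : V × U => w p.swap) p.swap)) = w := by
      funext p; simp
    constructor
    · exact this.1
    · have := this.2
      rw [show matchWeight (fun p : U × V => w p.swap.swap) (M'.image Prod.swap)
          = matchWeight w (M'.image Prod.swap) by
            apply Finset.sum_congr rfl; intro e _; simp,
        show maxWeight E (fun p : U × V => w p.swap.swap) = maxWeight E w by
            congr 1] at this
      exact this
  obtain ⟨i, hij⟩ := h _ hmax
  obtain ⟨a, ha, hae⟩ := Finset.mem_image.mp hij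
  have : a = (j₀, i) := by
    have := congrArg Prod.swap hae
    simpa using this
  subst this
  exact ⟨i, ha⟩

end Swap
section Perturb
variable {U V : Type*} [Fintype U] [Fintype V] [DecidableEq U] [DecidableEq V]

/-- A core imputation with strict slack on all subpar edges. -/
lemma exists_core_strict_subpar (E : Finset (U × V)) (w : U × V → ℚ)
    (hw : ∀ e ∈ E, 0 ≤ w e) :
    ∃ u v, InCore E w u v ∧
      ∀ e ∈ E, (¬ ∃ M, IsMaxMatching E w M ∧ e ∈ M) → w e < u e.1 + v e.2 := by
  classical
  set Sub : Finset (U × V) := E.filter (fun e => ¬ ∃ M, IsMaxMatching E w M ∧ e ∈ M)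
    with hSub
  by_cases hSubE : Sub = ∅
  · obtain ⟨u, v, hc⟩ := exists_core_of_nonneg E w hw
    refine ⟨u, v, hc, fun e he hne => absurd ?_ (Finset.notMem_empty e)⟩
    rw [← hSubE]
    exact Finset.mem_filter.mpr ⟨he, hne⟩
  · obtain ⟨esub, hesub⟩ := Finset.nonempty_iff_ne_empty.mpr hSubE
    set Bad : Finset (Finset (U × V)) :=
      ((E.powerset).filter (fun M => IsMatching E M)).filter
        (fun M => ∃ e ∈ Sub, e ∈ M) with hBad
    have hBadne : Bad.Nonempty := by
      refine ⟨{esub}, Finset.mem_filter.mpr ⟨?_, esub, hesub, Finset.mem_singleton_self _⟩⟩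
      exact matching_mem_filter E (single_isMatching E (Finset.mem_filter.mp hesub).1)
    have hBadlt : ∀ M ∈ Bad, matchWeight w M < maxWeight E w := by
      intro M hM
      obtain ⟨hM1, e, heSub, heM⟩ := Finset.mem_filter.mp hM
      have hMm : IsMatching E M := (Finset.mem_filter.mp hM1).2
      rcases lt_or_eq_of_le (matchWeight_le_maxWeight E w hMm) with h | h
      · exact h
      · exact absurd ⟨M, ⟨hMm, h⟩, heM⟩ (Finset.mem_filter.mp heSub).2
    obtain ⟨M₁, hM₁, hM₁eq⟩ := Finset.exists_mem_eq_sup' hBadne (matchWeight w)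
    set gap : ℚ := maxWeight E w - Bad.sup' hBadne (matchWeight w) with hgap
    have hgappos : 0 < gap := by
      rw [hgap, hM₁eq]
      linarith [hBadlt M₁ hM₁]
    set δ : ℚ := gap / (E.card + 1) with hδ
    have hδpos : 0 < δ := by positivity
    have hδE : δ * E.card < gap := by
      rw [hδ]
      rw [div_mul_eq_mul_div, div_lt_iff₀ (by positivity)]
      have : (0:ℚ) ≤ E.card := by positivity
      nlinarith
    set w' : U × V → ℚ := fun e => w e + if e ∈ Sub then δ else 0 with hw'
    have hw'w : ∀ M : Finset (U × V), matchWeight w' M =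
        matchWeight w M + δ * (M ∩ Sub).card := by
      intro M
      unfold matchWeight
      rw [hw', Finset.sum_add_distrib]
      congr 1
      rw [Finset.sum_ite_mem, Finset.sum_const]
      simp [mul_comm]
    have hmax' : maxWeight E w' = maxWeight E w := by
      apply le_antisymm
      · apply maxWeight_le
        intro M hMm
        rw [hw'w]
        by_cases hMS : M ∩ Sub = ∅
        · rw [hMS]
          simpa using matchWeight_le_maxWeight E w hMm
        · have hMBad : M ∈ Bad := by
            obtain ⟨e, he⟩ := Finset.nonempty_iff_ne_empty.mpr hMS
            exact Finset.mem_filter.mpr ⟨matching_mem_filter E hMm,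
              e, (Finset.mem_inter.mp he).2, (Finset.mem_inter.mp he).1⟩
          have h1 : matchWeight w M ≤ maxWeight E w - gap := by
            have := Finset.le_sup' (matchWeight w) hMBad
            rw [hgap]; linarith
          have h2 : ((M ∩ Sub).card : ℚ) ≤ E.card := by
            exact_mod_cast Finset.card_le_card
              (le_trans (Finset.inter_subset_left) hMm.1)
          nlinarith [hδpos]
      · obtain ⟨M₀, hM₀⟩ := exists_maxMatching E w
        have hM₀S : M₀ ∩ Sub = ∅ := by
          by_contra hne
          obtain ⟨e, he⟩ := Finset.nonempty_iff_ne_empty.mpr hne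
          have h1 := (Finset.mem_inter.mp he).1
          have h2 := (Finset.mem_filter.mp (Finset.mem_inter.mp he).2).2
          exact h2 ⟨M₀, hM₀, h1⟩
        have hkey := hw'w M₀
        rw [hM₀S] at hkey
        simp only [Finset.card_empty, Nat.cast_zero, mul_zero, add_zero] at hkey
        rw [← hM₀.2, ← hkey]
        exact matchWeight_le_maxWeight E w' hM₀.1
    obtain ⟨u, v, hu, hv, hf, hsum⟩ := exists_core_of_nonneg E w'
      (fun e he => by
        rw [hw']
        have := hw e he
        by_cases h : e ∈ Sub <;> simp [h] <;> linarith)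
    refine ⟨u, v, ⟨hu, hv, fun e he => ?_, by rw [hsum, hmax']⟩, fun e he hne => ?_⟩
    · have := hf e he
      rw [hw'] at this
      by_cases h : e ∈ Sub <;> simp [h] at this <;> linarith
    · have heSub : e ∈ Sub := Finset.mem_filter.mpr ⟨he, hne⟩
      have := hf e he
      simp only [hw', if_pos heSub] at this
      linarith

/-- Left-vertex version: essential vertices get paid in some core imputation. -/
lemma exists_core_pos_left (E : Finset (U × V)) (w : U × V → ℚ)
    (hw : ∀ e ∈ E, 0 < w e) (i₀ : U) (hq : EssentialVertex E w (Sum.inl i₀)) :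
    ∃ u v, InCore E w u v ∧ 0 < u i₀ := by
  classical
  obtain ⟨M₀, hM₀⟩ := exists_maxMatching E w
  obtain ⟨j₀, hj₀⟩ := hq M₀ hM₀
  have hE0 : (i₀, j₀) ∈ E := hM₀.1.1 hj₀
  have hEne : E.Nonempty := ⟨_, hE0⟩
  set NotCov : Finset (Finset (U × V)) :=
    ((E.powerset).filter (fun M => IsMatching E M)).filter
      (fun M => ¬ MatchedIn M (Sum.inl i₀)) with hNC
  have hNCne : NotCov.Nonempty := by
    refine ⟨∅, Finset.mem_filter.mpr ⟨matching_mem_filter E (empty_isMatching E), ?_⟩⟩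
    rintro ⟨j, hj⟩
    exact Finset.notMem_empty _ hj
  have hNClt : ∀ M ∈ NotCov, matchWeight w M < maxWeight E w := by
    intro M hM
    obtain ⟨hM1, hM2⟩ := Finset.mem_filter.mp hM
    have hMm : IsMatching E M := (Finset.mem_filter.mp hM1).2
    rcases lt_or_eq_of_le (matchWeight_le_maxWeight E w hMm) with h | h
    · exact h
    · exact absurd (hq M ⟨hMm, h⟩) hM2
  obtain ⟨M₁, hM₁, hM₁eq⟩ := Finset.exists_mem_eq_sup' hNCne (matchWeight w)
  set gap : ℚ := maxWeight E w - NotCov.sup' hNCne (matchWeight w) with hgap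
  have hgappos : 0 < gap := by
    rw [hgap, hM₁eq]
    linarith [hNClt M₁ hM₁]
  set wmin : ℚ := E.inf' hEne w with hwmin
  have hwminpos : 0 < wmin := by
    obtain ⟨e, he, heq⟩ := Finset.exists_mem_eq_inf' hEne w
    rw [hwmin, heq]
    exact hw e he
  set δ : ℚ := min (gap / 2) (wmin / 2) with hδ
  have hδpos : 0 < δ := lt_min (by positivity) (by positivity)
  have hδgap : δ < gap := lt_of_le_of_lt (min_le_left _ _) (by linarith)
  have hδw : ∀ e ∈ E, δ ≤ w e := by
    intro e he
    have h1 : wmin ≤ w e := Finset.inf'_le w he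
    have h2 := min_le_right (gap / 2) (wmin / 2)
    rw [← hδ] at h2
    linarith
  set w' : U × V → ℚ := fun e => w e - if e.1 = i₀ then δ else 0 with hw'
  have hw'nn : ∀ e ∈ E, 0 ≤ w' e := by
    intro e he
    rw [hw']
    have h1 := hδw e he
    by_cases h : e.1 = i₀ <;> simp [h] <;> linarith
  have hcount : ∀ M : Finset (U × V), IsMatching E M → MatchedIn M (Sum.inl i₀) →
      (M.filter (fun e => e.1 = i₀)).card = 1 := by
    intro M hMm hcov
    obtain ⟨j, hj⟩ := hcov
    rw [Finset.card_eq_one]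
    refine ⟨(i₀, j), Finset.ext fun e => ?_⟩
    simp only [Finset.mem_filter, Finset.mem_singleton]
    constructor
    · rintro ⟨heM, hei⟩
      exact hMm.2.1 e heM (i₀, j) hj hei
    · rintro rfl
      exact ⟨hj, rfl⟩
  have hw'w : ∀ M : Finset (U × V), matchWeight w' M =
      matchWeight w M - δ * (M.filter (fun e => e.1 = i₀)).card := by
    intro M
    unfold matchWeight
    rw [hw', Finset.sum_sub_distrib]
    congr 1
    rw [← Finset.sum_filter, Finset.sum_const]
    simp [mul_comm]
  have hmax' : maxWeight E w' = maxWeight E w - δ := by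
    apply le_antisymm
    · apply maxWeight_le
      intro M hMm
      rw [hw'w]
      by_cases hcov : MatchedIn M (Sum.inl i₀)
      · rw [hcount M hMm hcov]
        simp only [Nat.cast_one, mul_one]
        linarith [matchWeight_le_maxWeight E w hMm]
      · have hMNC : M ∈ NotCov := Finset.mem_filter.mpr ⟨matching_mem_filter E hMm, hcov⟩
        have h1 : matchWeight w M ≤ maxWeight E w - gap := by
          have := Finset.le_sup' (matchWeight w) hMNC
          rw [hgap]; linarith
        have h2 : (0:ℚ) ≤ δ * (M.filter (fun e => e.1 = i₀)).card := by positivity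
        linarith
    · have hcov := hq M₀ hM₀
      have hkey := hw'w M₀
      rw [hcount M₀ hM₀.1 hcov] at hkey
      simp only [Nat.cast_one, mul_one] at hkey
      calc maxWeight E w - δ = matchWeight w M₀ - δ := by rw [hM₀.2]
        _ = matchWeight w' M₀ := hkey.symm
        _ ≤ maxWeight E w' := matchWeight_le_maxWeight E w' hM₀.1
  obtain ⟨u, v, hu, hv, hf, hsum⟩ := exists_core_of_nonneg E w' hw'nn
  set u' : U → ℚ := fun i => if i = i₀ then u i + δ else u i with hu'
  refine ⟨u', v, ⟨fun i => ?_, hv, fun e he => ?_, ?_⟩, ?_⟩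
  · rw [hu']
    by_cases h : i = i₀ <;> simp [h] <;> linarith [hu i, hu i₀, hδpos]
  · have := hf e he
    rw [hw'] at this
    rw [hu']
    by_cases h : e.1 = i₀ <;> simp [h] at this ⊢ <;> linarith
  · have hsumu' : ∑ i, u' i = (∑ i, u i) + δ := by
      rw [hu']
      have hsp : ∀ i, (if i = i₀ then u i + δ else u i) = u i + (if i = i₀ then δ else 0) := by
        intro i; by_cases h : i = i₀ <;> simp [h]
      simp only [hsp, Finset.sum_add_distrib]
      congr 1
      simp
    have hfin : (∑ i, u i) + ∑ j, v j = maxWeight E w - δ := by rw [hsum, hmax']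
    rw [hsumu']
    linarith
  · have hval : u' i₀ = u i₀ + δ := by rw [hu']; simp
    rw [hval]
    linarith [hu i₀, hδpos]

/-- Both-sided version via swap. -/
lemma exists_core_pos (E : Finset (U × V)) (w : U × V → ℚ)
    (hw : ∀ e ∈ E, 0 < w e) (q : U ⊕ V) (hq : EssentialVertex E w q) :
    ∃ u v, InCore E w u v ∧ 0 < Sum.elim u v q := by
  classical
  cases q with
  | inl i₀ =>
    obtain ⟨u, v, hc, hpos⟩ := exists_core_pos_left E w hw i₀ hq
    exact ⟨u, v, hc, hpos⟩
  | inr j₀ =>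
    obtain ⟨v, u, hc, hpos⟩ := exists_core_pos_left (E.image Prod.swap)
      (fun p : V × U => w p.swap)
      (by
        intro p hp
        obtain ⟨a, ha, rfl⟩ := Finset.mem_image.mp hp
        simpa using hw a ha)
      j₀ (essential_swap hq)
    exact ⟨u, v, inCore_of_swap hc, hpos⟩

end Perturb
/-- Averages of core imputations are core imputations. -/
lemma inCore_avg {U V : Type*} [Fintype U] [Fintype V] [DecidableEq U] [DecidableEq V]
    {E : Finset (U × V)} {w : U × V → ℚ} {ι : Type*} (s : Finset ι) (hs : s.Nonempty)
    (fu : ι → U → ℚ) (fv : ι → V → ℚ) (hc : ∀ t ∈ s, InCore E w (fu t) (fv t)) :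
    InCore E w (fun i => (∑ t ∈ s, fu t i) / s.card)
      (fun j => (∑ t ∈ s, fv t j) / s.card) := by
  have hn : (0:ℚ) < s.card := by
    have := Finset.card_pos.mpr hs
    exact_mod_cast this
  refine ⟨fun i => ?_, fun j => ?_, fun e he => ?_, ?_⟩
  · exact div_nonneg (Finset.sum_nonneg fun t ht => (hc t ht).1 i) hn.le
  · exact div_nonneg (Finset.sum_nonneg fun t ht => (hc t ht).2.1 j) hn.le
  · rw [← add_div, le_div_iff₀ hn]
    calc w e * s.card = ∑ _t ∈ s, w e := by rw [Finset.sum_const]; ring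
      _ ≤ ∑ t ∈ s, (fu t e.1 + fv t e.2) :=
          Finset.sum_le_sum fun t ht => (hc t ht).2.2.1 e he
      _ = _ := by rw [Finset.sum_add_distrib]
  · have key : ∑ t ∈ s, ((∑ i, fu t i) + (∑ j, fv t j)) = maxWeight E w * s.card := by
      rw [Finset.sum_congr rfl (fun t ht => (hc t ht).2.2.2), Finset.sum_const]
      ring
    have h1 : ∑ i, ∑ t ∈ s, fu t i = ∑ t ∈ s, ∑ i, fu t i := Finset.sum_comm
    have h2 : ∑ j, ∑ t ∈ s, fv t j = ∑ t ∈ s, ∑ j, fv t j := Finset.sum_comm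
    rw [← Finset.sum_div, ← Finset.sum_div, ← add_div, div_eq_iff hn.ne']
    rw [h1, h2, ← Finset.sum_add_distrib, key]

/-- A connected component of viable edges all of whose vertices are essential
is not a unique imputation component: two core imputations differ on it. -/
theorem viable_component_all_essential_fundamental {U V : Type*}
    [Fintype U] [Fintype V] [DecidableEq U] [DecidableEq V]
    (E : Finset (U × V)) (w : U × V → ℚ) (hw : ∀ e ∈ E, 0 < w e)
    (q0 : U ⊕ V) (hne : ∃ q', ViableAdj E w q0 q')
    (hess : ∀ q : U ⊕ V, Relation.ReflTransGen (ViableAdj E w) q0 q →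
      EssentialVertex E w q) :
    ∃ (u : U → ℚ) (v : V → ℚ) (u' : U → ℚ) (v' : V → ℚ),
      InCore E w u v ∧ InCore E w u' v' ∧
      ∃ q : U ⊕ V, Relation.ReflTransGen (ViableAdj E w) q0 q ∧
        Sum.elim u v q ≠ Sum.elim u' v' q := by
  classical
  let Reach : (U ⊕ V) → Prop := fun q => Relation.ReflTransGen (ViableAdj E w) q0 q
  set CL : Finset U := Finset.univ.filter (fun i => Reach (Sum.inl i)) with hCL
  set CR : Finset V := Finset.univ.filter (fun j => Reach (Sum.inr j)) with hCRdef
  have memCL : ∀ {i : U}, i ∈ CL ↔ Reach (Sum.inl i) := fun {i} => by simp [hCL]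
  have memCR : ∀ {j : V}, j ∈ CR ↔ Reach (Sum.inr j) := fun {j} => by simp [hCRdef]
  have hincident : ∀ q, Reach q → ∃ e, e ∈ E ∧ ViableEdge E w e ∧
      (q = Sum.inl e.1 ∨ q = Sum.inr e.2) := by
    intro q hq
    rcases Relation.ReflTransGen.cases_tail hq with heq | ⟨c, _, hstep⟩
    · obtain ⟨q', e, heE, hev, hor⟩ := hne
      subst heq
      rcases hor with ⟨h1, _⟩ | ⟨h1, _⟩
      · exact ⟨e, heE, hev, Or.inl h1⟩
      · exact ⟨e, heE, hev, Or.inr h1⟩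
    · obtain ⟨e, heE, hev, hor⟩ := hstep
      rcases hor with ⟨_, h2⟩ | ⟨_, h2⟩
      · exact ⟨e, heE, hev, Or.inr h2⟩
      · exact ⟨e, heE, hev, Or.inl h2⟩
  have hstepLR : ∀ e, e ∈ E → ViableEdge E w e → Reach (Sum.inl e.1) →
      Reach (Sum.inr e.2) :=
    fun e he hv hr => hr.tail ⟨e, he, hv, Or.inl ⟨rfl, rfl⟩⟩
  have hstepRL : ∀ e, e ∈ E → ViableEdge E w e → Reach (Sum.inr e.2) →
      Reach (Sum.inl e.1) :=
    fun e he hv hr => hr.tail ⟨e, he, hv, Or.inr ⟨rfl, rfl⟩⟩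
  have hmaxedge : ∀ q, Reach q → ∀ M, IsMaxMatching E w M → ∀ e, e ∈ M →
      (q = Sum.inl e.1 ∨ q = Sum.inr e.2) → ViableEdge E w e := by
    intro q hq M hM e heM hinc
    by_contra hnv
    have hall : ∀ M', IsMaxMatching E w M' → e ∈ M' := by
      intro M' hM'
      by_contra hne'
      exact hnv ⟨⟨M, hM, heM⟩, ⟨M', hM', hne'⟩⟩
    obtain ⟨e', he'E, he'v, hinc'⟩ := hincident q hq
    obtain ⟨M'', hM'', he''⟩ := he'v.1
    have heM'' : e ∈ M'' := hall M'' hM''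
    have hee' : e = e' := by
      rcases hinc with h | h <;> rcases hinc' with h' | h'
      · exact hM''.1.2.1 e heM'' e' he'' (Sum.inl_injective (h.symm.trans h'))
      · exact absurd (h.symm.trans h') (Sum.inl_ne_inr)
      · exact absurd (h'.symm.trans h) (Sum.inl_ne_inr)
      · exact hM''.1.2.2 e heM'' e' he'' (Sum.inr_injective (h.symm.trans h'))
    exact hnv (by rw [hee']; exact he'v)
  have hpartnerR : ∀ M, IsMaxMatching E w M → ∀ e, e ∈ M →
      Reach (Sum.inl e.1) → Reach (Sum.inr e.2) := by
    intro M hM e heM hr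
    exact hstepLR e (hM.1.1 heM) (hmaxedge _ hr M hM e heM (Or.inl rfl)) hr
  have hpartnerL : ∀ M, IsMaxMatching E w M → ∀ e, e ∈ M →
      Reach (Sum.inr e.2) → Reach (Sum.inl e.1) := by
    intro M hM e heM hr
    exact hstepRL e (hM.1.1 heM) (hmaxedge _ hr M hM e heM (Or.inr rfl)) hr
  obtain ⟨M₀, hM₀⟩ := exists_maxMatching E w
  have hmatchedL : ∀ i ∈ CL, ∃ j, (i, j) ∈ M₀ :=
    fun i hi => hess _ (memCL.mp hi) M₀ hM₀
  have hcards : CL.card = CR.card := by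
    apply Finset.card_bij (fun i hi => (hmatchedL i hi).choose)
    · intro i hi
      have hj := (hmatchedL i hi).choose_spec
      exact memCR.mpr (hpartnerR M₀ hM₀ _ hj (memCL.mp hi))
    · intro i hi i' hi' heq
      have hj := (hmatchedL i hi).choose_spec
      have hj' := (hmatchedL i' hi').choose_spec
      rw [heq] at hj
      have := hM₀.1.2.2 _ hj _ hj' rfl
      exact congrArg Prod.fst this
    · intro j hj
      obtain ⟨i, hij⟩ := hess _ (memCR.mp hj) M₀ hM₀
      have hiCL : i ∈ CL := memCL.mpr (hpartnerL M₀ hM₀ _ hij (memCR.mp hj))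
      refine ⟨i, hiCL, ?_⟩
      have hjc := (hmatchedL i hiCL).choose_spec
      have := hM₀.1.2.1 _ hjc _ hij rfl
      exact congrArg Prod.snd this
  have hcross : ∀ e ∈ E, e.1 ∉ CL → e.2 ∈ CR →
      ¬ ∃ M, IsMaxMatching E w M ∧ e ∈ M := by
    rintro e he hnl hr ⟨M, hM, heM⟩
    exact hnl (memCL.mpr (hpartnerL M hM e heM (memCR.mp hr)))
  have hq0 : Reach q0 := Relation.ReflTransGen.refl
  obtain ⟨e₀, he₀E, he₀v, hinc₀⟩ := hincident q0 hq0
  have hCRne : CR.Nonempty := by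
    rcases hinc₀ with h | h
    · exact ⟨e₀.2, memCR.mpr (hstepLR e₀ he₀E he₀v (by rw [h] at hq0; exact hq0))⟩
    · exact ⟨e₀.2, memCR.mpr (by rw [h] at hq0; exact hq0)⟩
  obtain ⟨u₀, v₀, hc₀, hstrict₀⟩ :=
    exists_core_strict_subpar E w (fun e he => (hw e he).le)
  have hposall : ∀ j : V, ∃ uv : (U → ℚ) × (V → ℚ),
      InCore E w uv.1 uv.2 ∧ (j ∈ CR → 0 < uv.2 j) := by
    intro j
    by_cases hj : j ∈ CR
    · obtain ⟨u, v, hc, hp⟩ := exists_core_pos E w hw (Sum.inr j) (hess _ (memCR.mp hj))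
      exact ⟨(u, v), hc, fun _ => by simpa using hp⟩
    · exact ⟨(u₀, v₀), hc₀, fun h => absurd h hj⟩
  choose ψ hψc hψp using hposall
  set s : Finset (Option V) := insert none (CR.image some) with hs
  have hnone : (none : Option V) ∉ CR.image some := by simp
  have hsne : s.Nonempty := ⟨none, Finset.mem_insert_self _ _⟩
  set fu : Option V → U → ℚ := fun o => o.elim u₀ (fun j => (ψ j).1) with hfu
  set fv : Option V → V → ℚ := fun o => o.elim v₀ (fun j => (ψ j).2) with hfv
  have hcall : ∀ t ∈ s, InCore E w (fu t) (fv t) := by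
    intro t _
    cases t with
    | none => exact hc₀
    | some j => exact hψc j
  set ub : U → ℚ := fun i => (∑ t ∈ s, fu t i) / s.card with hub
  set vb : V → ℚ := fun j => (∑ t ∈ s, fv t j) / s.card with hvb
  have hcb : InCore E w ub vb := inCore_avg s hsne fu fv hcall
  have hncard : (0:ℚ) < s.card := by
    exact_mod_cast Finset.card_pos.mpr hsne
  have hscard : (s.card : ℚ) = ((CR.image some).card : ℚ) + 1 := by
    rw [hs, Finset.card_insert_of_notMem hnone]
    push_cast
    ring
  have hstrictb : ∀ e ∈ E, (¬ ∃ M, IsMaxMatching E w M ∧ e ∈ M) →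
      w e < ub e.1 + vb e.2 := by
    intro e he hsub
    simp only [hub, hvb]
    rw [← add_div, lt_div_iff₀ hncard, ← Finset.sum_add_distrib]
    have hsplit : ∑ t ∈ s, (fu t e.1 + fv t e.2) =
        (fu none e.1 + fv none e.2) + ∑ t ∈ CR.image some, (fu t e.1 + fv t e.2) := by
      rw [hs, Finset.sum_insert hnone]
    have h1 : w e < fu none e.1 + fv none e.2 := hstrict₀ e he hsub
    have h2 : ((CR.image some).card : ℚ) * w e ≤
        ∑ t ∈ CR.image some, (fu t e.1 + fv t e.2) := by
      calc ((CR.image some).card : ℚ) * w e = ∑ _t ∈ CR.image some, w e := by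
            rw [Finset.sum_const]; ring
        _ ≤ _ := Finset.sum_le_sum
            (fun t ht => (hcall t (Finset.mem_insert_of_mem ht)).2.2.1 e he)
    rw [hsplit]
    rw [hscard]
    nlinarith
  have hposb : ∀ j ∈ CR, 0 < vb j := by
    intro j hj
    simp only [hvb]
    apply div_pos ?_ hncard
    exact Finset.sum_pos' (fun t ht => (hcall t ht).2.1 j)
      ⟨some j, Finset.mem_insert_of_mem (Finset.mem_image_of_mem some hj), hψp j hj⟩
  set ε₁ : ℚ := CR.inf' hCRne vb with hε₁
  have hε₁pos : 0 < ε₁ := by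
    obtain ⟨j, hj, heq⟩ := Finset.exists_mem_eq_inf' hCRne vb
    rw [hε₁, heq]
    exact hposb j hj
  set Sub' : Finset (U × V) := E.filter (fun e => e.1 ∉ CL ∧ e.2 ∈ CR) with hSub'
  obtain ⟨ε₂, hε₂pos, hε₂⟩ : ∃ ε₂ : ℚ, 0 < ε₂ ∧
      ∀ e ∈ Sub', ε₂ ≤ ub e.1 + vb e.2 - w e := by
    by_cases hS : Sub'.Nonempty
    · refine ⟨Sub'.inf' hS (fun e => ub e.1 + vb e.2 - w e), ?_,
        fun e he => Finset.inf'_le _ he⟩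
      obtain ⟨e, he, heq⟩ := Finset.exists_mem_eq_inf' hS (fun e => ub e.1 + vb e.2 - w e)
      rw [heq]
      obtain ⟨heE, hnl, hr⟩ := Finset.mem_filter.mp he
      have := hstrictb e heE (hcross e heE hnl hr)
      linarith
    · exact ⟨1, one_pos, fun e he => absurd ⟨e, he⟩ hS⟩
  set ε : ℚ := min ε₁ ε₂ with hε
  have hεpos : 0 < ε := lt_min hε₁pos hε₂pos
  set u' : U → ℚ := fun i => ub i + if i ∈ CL then ε else 0 with hu'
  set v' : V → ℚ := fun j => vb j - if j ∈ CR then ε else 0 with hv'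
  obtain ⟨hub0, hvb0, hfb, hsb⟩ := hcb
  have hcore' : InCore E w u' v' := by
    refine ⟨fun i => ?_, fun j => ?_, fun e he => ?_, ?_⟩
    · simp only [hu']
      by_cases h : i ∈ CL <;> simp [h] <;> linarith [hub0 i, hεpos]
    · simp only [hv']
      by_cases h : j ∈ CR
      · have h1 : ε ≤ ε₁ := min_le_left _ _
        have h2 : ε₁ ≤ vb j := Finset.inf'_le _ h
        simp [h]
        linarith
      · simp [h]
        exact hvb0 j
    · simp only [hu', hv']
      by_cases h1 : e.1 ∈ CL
      · by_cases h2 : e.2 ∈ CR <;> simp [h1, h2] <;> linarith [hfb e he, hεpos]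
      · by_cases h2 : e.2 ∈ CR
        · have hin : e ∈ Sub' := Finset.mem_filter.mpr ⟨he, h1, h2⟩
          have h3 : ε ≤ ε₂ := min_le_right _ _
          have h4 := hε₂ e hin
          simp [h1, h2]
          linarith
        · simp [h1, h2]
          linarith [hfb e he]
    · have hsu : ∑ i, u' i = (∑ i, ub i) + ε * CL.card := by
        simp only [hu', Finset.sum_add_distrib]
        congr 1
        rw [Finset.sum_ite_mem, Finset.univ_inter, Finset.sum_const]
        simp [mul_comm]
      have hsv : ∑ j, v' j = (∑ j, vb j) - ε * CR.card := by
        simp only [hv', Finset.sum_sub_distrib]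
        congr 1
        rw [Finset.sum_ite_mem, Finset.univ_inter, Finset.sum_const]
        simp [mul_comm]
      rw [hsu, hsv, hcards]
      linarith [hsb]
  obtain ⟨j₁, hj₁⟩ := hCRne
  refine ⟨ub, vb, u', v', ⟨hub0, hvb0, hfb, hsb⟩, hcore', Sum.inr j₁, memCR.mp hj₁, ?_⟩
  have hval : v' j₁ = vb j₁ - ε := by
    simp only [hv', if_pos hj₁]
  simp only [Sum.elim_inr, hval]
  intro heq
  linarith
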